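/- The following are equivalent: (i) F_{n+2} = F_n + F_{n+1} for all n ≥ 1; (ii) F_3 = F_1 + F_2; (iii) d = 5 and a = b = 1/2 (i.e., ε = (1+√5)/2). -/

import Mathlib

/-!
`ε` and `ε̄` are the roots of `X² - 2aX + Δ`, so `F` is the Lucas sequence
`F (n+2) = 2a F (n+1) - Δ F n` with `F 1 = 1`, `F 2 = 2a`, `F 3 = 4a² - Δ`. The equation
`4a² - Δ = 1 + 2a` with `a > 0` and `Δ = ±1` forces `Δ = -1`, `a = 1/2`, hence `d (2b)² = 5`,
and squarefreeness of `d` gives `d = 5`, `b = 1/2`. Then the recurrence is `F (n+2) = F (n+1) + F n`.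
-/

theorem Squarefree.eq_and_sq_eq_one_of_mul_sq_eq {d e : ℕ} (hd : Squarefree d) (he : Squarefree e)
    {c : ℚ} (h : d * c ^ 2 = e) : d = e ∧ c ^ 2 = 1 := by
  have hcleared : (d : ℤ) * c.num ^ 2 = e * (c.den : ℤ) ^ 2 := by
    have : (d : ℚ) * c.num ^ 2 = e * (c.den : ℚ) ^ 2 := by
      rw [← Rat.mul_den_eq_num, mul_pow, ← mul_assoc, h]
    exact_mod_cast this
  have hden : c.den = 1 := by
    have hcop : IsCoprime (c.den : ℤ) c.num :=
      Int.isCoprime_iff_gcd_eq_one.mpr c.reduced.symm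
    have hdvd : (c.den : ℤ) ^ 2 ∣ d :=
      hcop.pow.dvd_of_dvd_mul_right ⟨e, by rw [hcleared]; ring⟩
    have hdvd' : c.den * c.den ∣ d := by rw [← sq]; exact_mod_cast hdvd
    exact Nat.isUnit_iff.mp (hd _ hdvd')
  have hnum : d * c.num.natAbs ^ 2 = e := by
    rw [hden] at hcleared
    have := congrArg Int.natAbs hcleared
    simpa [Int.natAbs_mul, Int.natAbs_pow] using this
  have hnum1 : c.num.natAbs = 1 :=
    Nat.isUnit_iff.mp (he _ ⟨d, by rw [← hnum]; ring⟩)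
  have hc : c ^ 2 = 1 := by
    have : c.num ^ 2 = 1 := by rw [← Int.natAbs_sq, hnum1]; rfl
    rw [← Rat.coe_int_num_of_den_eq_one hden]; exact_mod_cast this
  exact ⟨by simpa [hnum1] using hnum, hc⟩

theorem four_sq_sub_norm_eq_one_add_two_mul_iff {d : ℕ} (hd : Squarefree d) {a b : ℚ}
    (ha : 0 < a) (hb : 0 < b) {Δ : ℚ} (hΔ : Δ = a ^ 2 - d * b ^ 2) (hΔ1 : Δ = 1 ∨ Δ = -1) :
    4 * a ^ 2 - Δ = 1 + 2 * a ↔ d = 5 ∧ a = 1 / 2 ∧ b = 1 / 2 := by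
  constructor
  · intro h
    rcases hΔ1 with rfl | rfl
    · have ha1 : a = 1 := by
        have : (a - 1) * (2 * a + 1) = 0 := by linear_combination h / 2
        rcases mul_eq_zero.mp this with h' | h' <;> linarith
      have hd0 : (0 : ℚ) < d := by exact_mod_cast hd.ne_zero.bot_lt
      subst ha1
      nlinarith [mul_pos hd0 (pow_pos hb 2)]
    · have ha2 : a = 1 / 2 := by
        have : a * (2 * a - 1) = 0 := by linear_combination h / 2
        rcases mul_eq_zero.mp this with h' | h' <;> linarith
      subst ha2
      obtain ⟨hd5, hb2⟩ := hd.eq_and_sq_eq_one_of_mul_sq_eq (e := 5)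
        Nat.prime_five.prime.squarefree (c := 2 * b) (by push_cast; linear_combination 4 * hΔ)
      refine ⟨hd5, rfl, ?_⟩
      nlinarith
  · rintro ⟨rfl, rfl, rfl⟩
    norm_num [hΔ]

theorem pow_sub_pow_div_sub_add_two {K : Type*} [Field K] (x y : K) (n : ℕ) :
    (x ^ (n + 2) - y ^ (n + 2)) / (x - y) =
      (x + y) * ((x ^ (n + 1) - y ^ (n + 1)) / (x - y)) - x * y * ((x ^ n - y ^ n) / (x - y)) := by
  rw [mul_div_assoc', mul_div_assoc', div_sub_div_same]
  congr 1
  ring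

theorem stmt_8_general (d : ℕ) (hd : Squarefree d)
    (a b : ℚ) (ha : 0 < a) (hb : 0 < b)
    (ε εb : ℝ) (hε : ε = a + b * Real.sqrt d) (hεb : εb = a - b * Real.sqrt d)
    (Δ : ℚ) (hΔ : Δ = a^2 - d * b^2) (hΔ1 : Δ = 1 ∨ Δ = -1)
    (F : ℕ → ℝ) (hF : ∀ n, F n = (ε^n - εb^n)/(ε - εb)) :
    ((∀ n : ℕ, 1 ≤ n → F (n+2) = F n + F (n+1)) ↔ F 3 = F 1 + F 2) ∧
      (F 3 = F 1 + F 2 ↔ (d = 5 ∧ a = 1/2 ∧ b = 1/2)) := by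
  have hsqrt : Real.sqrt d ^ 2 = d := Real.sq_sqrt d.cast_nonneg
  have htrace : ε + εb = 2 * a := by rw [hε, hεb]; ring
  have hnorm : ε * εb = Δ := by
    rw [hε, hεb, hΔ]; push_cast; linear_combination (-(b : ℝ) ^ 2) * hsqrt
  have hne : ε - εb ≠ 0 := by
    have : (0 : ℝ) < d := by exact_mod_cast hd.ne_zero.bot_lt
    rw [hε, hεb]; ring_nf; positivity
  have hrec (n : ℕ) : F (n + 2) = 2 * a * F (n + 1) - Δ * F n := by
    rw [hF, hF, hF, pow_sub_pow_div_sub_add_two, htrace, hnorm]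
  have hF0 : F 0 = 0 := by simp [hF]
  have hF1 : F 1 = 1 := by rw [hF, pow_one, pow_one, div_self hne]
  have hF2 : F 2 = 2 * a := by rw [hrec 0, hF0, hF1]; ring
  have hF3 : F 3 = 4 * a ^ 2 - Δ := by rw [hrec 1, hF2, hF1]; ring
  have hiii : F 3 = F 1 + F 2 ↔ d = 5 ∧ a = 1 / 2 ∧ b = 1 / 2 := by
    rw [← four_sq_sub_norm_eq_one_add_two_mul_iff hd ha hb hΔ hΔ1, hF3, hF1, hF2]
    norm_cast
  refine ⟨⟨fun h => h 1 le_rfl, fun h n _ => ?_⟩, hiii⟩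
  obtain ⟨rfl, rfl, rfl⟩ := hiii.mp h
  have hΔ' : Δ = -1 := by norm_num [hΔ]
  rw [hrec, hΔ']; push_cast; ring

theorem stmt_8 (d : ℕ) (hd : Squarefree d) (hdpos : 0 < d)
    (a b : ℚ) (ha : 0 < a) (hb : 0 < b)
    (ε εb : ℝ) (hε : ε = a + b * Real.sqrt d) (hεb : εb = a - b * Real.sqrt d)
    (Δ : ℚ) (hΔ : Δ = a^2 - d * b^2) (hΔ1 : Δ = 1 ∨ Δ = -1)
    (F : ℕ → ℝ) (hF : ∀ n, F n = (ε^n - εb^n)/(ε - εb)) :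
    ((∀ n : ℕ, 1 ≤ n → F (n+2) = F n + F (n+1)) ↔ F 3 = F 1 + F 2) ∧
      (F 3 = F 1 + F 2 ↔ (d = 5 ∧ a = 1/2 ∧ b = 1/2)) :=
  stmt_8_general d hd a b ha hb ε εb hε hεb Δ hΔ hΔ1 F hF
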